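/- Let f, g : I → ℝ be 4 times differentiable functions such that W^{0,1}_{f,g} is not identically zero on I, and suppose D_{f,g}(x,y) = 0 for all x, y ∈ I. Then there exist constants a, b, c, d, γ ∈ ℝ with ad ≠ bc such that f = a·ψ₁ + b·ψ₂ and g = c·ψ₁ + d·ψ₂ on I, where: if γ < 0 then ψ₁(x) = sin(√(−γ)·x) and ψ₂(x) = cos(√(−γ)·x); if γ = 0 then ψ₁(x) = x and ψ₂(x) = 1; and if γ > 0 then ψ₁(x) = sinh(√γ·x) and ψ₂(x) = cosh(√γ·x). -/

import Mathlib

/-!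
Along the lines `x = m + t`, `y = m - t` the equation `D_{f,g} = 0` is even in `t`, and its
second and fourth `t`-derivatives at `t = 0` give `W^{0,2} = W^{0,4} = 0`. Differentiating
`W^{0,2} = 0` twice then yields `W^{1,3} = 0`, so `W^{0,1}` and `W^{2,1}` are constant, and the
identity `f'' W^{0,1} - f W^{2,1} = f' W^{0,2}` (and its analogue for `g`) gives `f'' = γ f`,
`g'' = γ g` with `γ = W^{2,1} / W^{0,1}`. Finally, Wronskians of solutions of `u'' = γ u` are
constant, which expresses every solution in a fundamental pair `ψ₁, ψ₂` with constant
coefficients; the determinant of the coefficients of `f, g` is `W^{0,1}_{f,g} / W(ψ₁, ψ₂) ≠ 0`.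
-/

/-- The two-variable determinant expression
`D_{f,g}(x,y) = f((x+y)/2)·(g(x)+g(y)) − g((x+y)/2)·(f(x)+f(y))`. -/
noncomputable def Dfg (f g : ℝ → ℝ) (x y : ℝ) : ℝ :=
  f ((x + y) / 2) * (g x + g y) - g ((x + y) / 2) * (f x + f y)

/-- The generalized Wronskian
`W^{k,ℓ}_{f,g}(x) = f^{(k)}(x) g^{(ℓ)}(x) − g^{(k)}(x) f^{(ℓ)}(x)`. -/
noncomputable def Wfg (f g : ℝ → ℝ) (k l : ℕ) (x : ℝ) : ℝ :=
  iteratedDeriv k f x * iteratedDeriv l g x - iteratedDeriv k g x * iteratedDeriv l f x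

open Set

section Calculus

variable {U : Set ℝ}

theorem IsOpen.apply_eq_of_hasDerivAt_zero (hU : IsOpen U) (hUc : IsPreconnected U)
    {φ : ℝ → ℝ} (hφ : ∀ x ∈ U, HasDerivAt φ 0 x) {x y : ℝ} (hx : x ∈ U) (hy : y ∈ U) :
    φ x = φ y :=
  hU.is_const_of_deriv_eq_zero hUc
    (fun z hz => (hφ z hz).differentiableAt.differentiableWithinAt) (fun z hz => (hφ z hz).deriv)
    hx hy

theorem HasDerivAt.eq_zero_of_eqOn_zero (hU : IsOpen U) {φ : ℝ → ℝ} {φ' x : ℝ}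
    (hφ : HasDerivAt φ φ' x) (hx : x ∈ U) (h0 : EqOn φ 0 U) : φ' = 0 :=
  hφ.unique <| (hasDerivAt_const x 0).congr_of_eventuallyEq <|
    Filter.eventually_of_mem (hU.mem_nhds hx) h0

theorem eqOn_zero_of_hasDerivAt_succ (hU : IsOpen U) {φ : ℕ → ℝ → ℝ} {n : ℕ}
    (hφ : ∀ k < n, ∀ t ∈ U, HasDerivAt (φ k) (φ (k + 1) t) t) (h0 : EqOn (φ 0) 0 U) :
    EqOn (φ n) 0 U := by
  induction n with
  | zero => exact h0
  | succ n ih =>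
    intro t ht
    exact (hφ n n.lt_succ_self t ht).eq_zero_of_eqOn_zero hU ht (ih fun k hk => hφ k (by omega))

theorem DifferentiableAt.hasDerivAt_iteratedDeriv {f : ℝ → ℝ} {k : ℕ} {x : ℝ}
    (h : DifferentiableAt ℝ (iteratedDeriv k f) x) :
    HasDerivAt (iteratedDeriv k f) (iteratedDeriv (k + 1) f x) x := by
  rw [iteratedDeriv_succ]
  exact h.hasDerivAt

theorem hasDerivAt_iteratedDeriv_add_add_neg_one_pow_mul_sub {f : ℝ → ℝ} {k : ℕ} {m t : ℝ}
    (h₁ : DifferentiableAt ℝ (iteratedDeriv k f) (m + t))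
    (h₂ : DifferentiableAt ℝ (iteratedDeriv k f) (m - t)) :
    HasDerivAt (fun t => iteratedDeriv k f (m + t) + (-1) ^ k * iteratedDeriv k f (m - t))
      (iteratedDeriv (k + 1) f (m + t) + (-1) ^ (k + 1) * iteratedDeriv (k + 1) f (m - t)) t := by
  refine ((h₁.hasDerivAt_iteratedDeriv.comp_const_add m t).add
    ((h₂.hasDerivAt_iteratedDeriv.comp_const_sub m t).const_mul ((-1) ^ k))).congr_deriv ?_
  ring

end Calculus

section FunctionalEquation

variable {I : Set ℝ} {f g : ℝ → ℝ}

theorem hasDerivAt_Wfg {k l : ℕ} {x : ℝ}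
    (hfk : DifferentiableAt ℝ (iteratedDeriv k f) x)
    (hfl : DifferentiableAt ℝ (iteratedDeriv l f) x)
    (hgk : DifferentiableAt ℝ (iteratedDeriv k g) x)
    (hgl : DifferentiableAt ℝ (iteratedDeriv l g) x) :
    HasDerivAt (Wfg f g k l) (Wfg f g (k + 1) l x + Wfg f g k (l + 1) x) x := by
  refine ((hfk.hasDerivAt_iteratedDeriv.mul hgl.hasDerivAt_iteratedDeriv).sub
    (hgk.hasDerivAt_iteratedDeriv.mul hfl.hasDerivAt_iteratedDeriv)).congr_deriv ?_
  simp only [Wfg]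
  ring

/-- With `x = m + t`, `y = m - t` the equation `D_{f,g} = 0` reads
`f(m) (g(m+t) + g(m-t)) = g(m) (f(m+t) + f(m-t))`, whose `n`-th `t`-derivative at `t = 0`
is `2 W^{0,n}_{f,g}(m)` for even `n`. -/
theorem Wfg_zero_eqOn_zero_of_even (hI : IsOpen I) {n : ℕ}
    (hf : ∀ k < n, ∀ x ∈ I, DifferentiableAt ℝ (iteratedDeriv k f) x)
    (hg : ∀ k < n, ∀ x ∈ I, DifferentiableAt ℝ (iteratedDeriv k g) x)
    (hD : ∀ x ∈ I, ∀ y ∈ I, Dfg f g x y = 0) (hn : Even n) : EqOn (Wfg f g 0 n) 0 I := by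
  intro m hm
  set U := {t | m + t ∈ I ∧ m - t ∈ I}
  have hU : IsOpen U := (hI.preimage (continuous_const.add continuous_id)).inter
    (hI.preimage (continuous_const.sub continuous_id))
  let φ : ℕ → ℝ → ℝ := fun k t =>
    f m * (iteratedDeriv k g (m + t) + (-1) ^ k * iteratedDeriv k g (m - t)) -
      g m * (iteratedDeriv k f (m + t) + (-1) ^ k * iteratedDeriv k f (m - t))
  have hφ : ∀ k < n, ∀ t ∈ U, HasDerivAt (φ k) (φ (k + 1) t) t := fun k hk t ht =>
    ((hasDerivAt_iteratedDeriv_add_add_neg_one_pow_mul_sub (hg k hk _ ht.1)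
      (hg k hk _ ht.2)).const_mul (f m)).sub
    ((hasDerivAt_iteratedDeriv_add_add_neg_one_pow_mul_sub (hf k hk _ ht.1)
      (hf k hk _ ht.2)).const_mul (g m))
  have hφ₀ : EqOn (φ 0) 0 U := fun t ht => by
    have h := hD _ ht.1 _ ht.2
    rw [Dfg, show (m + t + (m - t)) / 2 = m by ring] at h
    simp only [φ, iteratedDeriv_zero, pow_zero, one_mul, Pi.zero_apply]
    linear_combination h
  have h := eqOn_zero_of_hasDerivAt_succ hU hφ hφ₀ (show (0 : ℝ) ∈ U by simp [U, hm])
  simp only [φ, add_zero, sub_zero, hn.neg_one_pow, one_mul, Pi.zero_apply] at h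
  simp only [Wfg, iteratedDeriv_zero, Pi.zero_apply]
  linear_combination h / 2

theorem hasDerivAt_Wfg_of_lt_four
    (hf : ∀ k < 4, ∀ x ∈ I, DifferentiableAt ℝ (iteratedDeriv k f) x)
    (hg : ∀ k < 4, ∀ x ∈ I, DifferentiableAt ℝ (iteratedDeriv k g) x)
    {k l : ℕ} (hk : k < 4) (hl : l < 4) {x : ℝ} (hx : x ∈ I) :
    HasDerivAt (Wfg f g k l) (Wfg f g (k + 1) l x + Wfg f g k (l + 1) x) x :=
  hasDerivAt_Wfg (hf k hk x hx) (hf l hl x hx) (hg k hk x hx) (hg l hl x hx)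

/-- Differentiating `W^{0,2} = 0` twice gives `W^{0,4} + 2 W^{1,3} = 0`. -/
theorem Wfg_one_three_eqOn_zero (hI : IsOpen I)
    (hf : ∀ k < 4, ∀ x ∈ I, DifferentiableAt ℝ (iteratedDeriv k f) x)
    (hg : ∀ k < 4, ∀ x ∈ I, DifferentiableAt ℝ (iteratedDeriv k g) x)
    (hD : ∀ x ∈ I, ∀ y ∈ I, Dfg f g x y = 0) : EqOn (Wfg f g 1 3) 0 I := by
  have h02 : EqOn (Wfg f g 0 2) 0 I := Wfg_zero_eqOn_zero_of_even hI
    (fun k hk => hf k (by omega)) (fun k hk => hg k (by omega)) hD even_two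
  have h04 : EqOn (Wfg f g 0 4) 0 I := Wfg_zero_eqOn_zero_of_even hI hf hg hD (by decide)
  have h12 : EqOn (fun x => Wfg f g 1 2 x + Wfg f g 0 3 x) 0 I := fun x hx =>
    (hasDerivAt_Wfg_of_lt_four hf hg (k := 0) (l := 2) (by norm_num) (by norm_num)
      hx).eq_zero_of_eqOn_zero hI hx h02
  intro x hx
  have h := ((hasDerivAt_Wfg_of_lt_four hf hg (k := 1) (l := 2) (by norm_num) (by norm_num) hx).add
    (hasDerivAt_Wfg_of_lt_four hf hg (k := 0) (l := 3) (by norm_num) (by norm_num)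
      hx)).eq_zero_of_eqOn_zero hI hx h12
  have h04x := h04 hx
  simp only [Wfg, Pi.zero_apply] at h h04x ⊢
  linear_combination h / 2 - h04x / 2

theorem exists_iteratedDeriv_two_eq_mul (hI : IsOpen I) (hIc : IsPreconnected I)
    (hf : ∀ k < 4, ∀ x ∈ I, DifferentiableAt ℝ (iteratedDeriv k f) x)
    (hg : ∀ k < 4, ∀ x ∈ I, DifferentiableAt ℝ (iteratedDeriv k g) x)
    (hD : ∀ x ∈ I, ∀ y ∈ I, Dfg f g x y = 0) {x₀ : ℝ} (hx₀ : x₀ ∈ I)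
    (hW : Wfg f g 0 1 x₀ ≠ 0) :
    ∃ γ : ℝ, ∀ x ∈ I, iteratedDeriv 2 f x = γ * f x ∧ iteratedDeriv 2 g x = γ * g x := by
  have h02 : EqOn (Wfg f g 0 2) 0 I := Wfg_zero_eqOn_zero_of_even hI
    (fun k hk => hf k (by omega)) (fun k hk => hg k (by omega)) hD even_two
  have h13 := Wfg_one_three_eqOn_zero hI hf hg hD
  have hW01 : ∀ x ∈ I, Wfg f g 0 1 x = Wfg f g 0 1 x₀ := fun x hx =>
    hI.apply_eq_of_hasDerivAt_zero hIc (fun y hy =>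
      (hasDerivAt_Wfg_of_lt_four hf hg (k := 0) (l := 1) (by norm_num) (by norm_num) hy).congr_deriv
        (by have h := h02 hy; simp only [Wfg, Pi.zero_apply] at h ⊢; linear_combination h)) hx hx₀
  have hW21 : ∀ x ∈ I, Wfg f g 2 1 x = Wfg f g 2 1 x₀ := fun x hx =>
    hI.apply_eq_of_hasDerivAt_zero hIc (fun y hy =>
      (hasDerivAt_Wfg_of_lt_four hf hg (k := 2) (l := 1) (by norm_num) (by norm_num) hy).congr_deriv
        (by have h := h13 hy; simp only [Wfg, Pi.zero_apply] at h ⊢; linear_combination -h)) hx hx₀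
  refine ⟨Wfg f g 2 1 x₀ / Wfg f g 0 1 x₀, fun x hx => ?_⟩
  have h02x := h02 hx
  rw [← hW01 x hx, ← hW21 x hx]
  rw [← hW01 x hx] at hW
  simp only [Wfg, iteratedDeriv_zero, Pi.zero_apply] at h02x hW ⊢
  constructor <;> rw [div_mul_eq_mul_div, eq_div_iff hW]
  · linear_combination iteratedDeriv 1 f x * h02x
  · linear_combination iteratedDeriv 1 g x * h02x

end FunctionalEquation

/-- `u` solves `u'' = γ u` on `I`, with `u'` as its derivative. -/
def SolvesODEOn (γ : ℝ) (u u' : ℝ → ℝ) (I : Set ℝ) : Prop :=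
  ∀ x ∈ I, HasDerivAt u (u' x) x ∧ HasDerivAt u' (γ * u x) x

theorem solvesODEOn_of_iteratedDeriv_two_eq {I : Set ℝ} {f : ℝ → ℝ} {γ : ℝ}
    (hf : ∀ k < 2, ∀ x ∈ I, DifferentiableAt ℝ (iteratedDeriv k f) x)
    (hγ : ∀ x ∈ I, iteratedDeriv 2 f x = γ * f x) : SolvesODEOn γ f (iteratedDeriv 1 f) I :=
  fun x hx => ⟨by simpa using (hf 0 (by norm_num) x hx).hasDerivAt_iteratedDeriv,
    hγ x hx ▸ (hf 1 (by norm_num) x hx).hasDerivAt_iteratedDeriv⟩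

namespace SolvesODEOn

variable {γ : ℝ} {I : Set ℝ} {u u' v v' : ℝ → ℝ}

theorem hasDerivAt_wronskian (hu : SolvesODEOn γ u u' I) (hv : SolvesODEOn γ v v' I) {x : ℝ}
    (hx : x ∈ I) : HasDerivAt (fun x => u x * v' x - v x * u' x) 0 x := by
  obtain ⟨hu₁, hu₂⟩ := hu x hx
  obtain ⟨hv₁, hv₂⟩ := hv x hx
  exact ((hu₁.mul hv₂).sub (hv₁.mul hu₂)).congr_deriv (by ring)

theorem wronskian_eq (hI : IsOpen I) (hIc : IsPreconnected I) (hu : SolvesODEOn γ u u' I)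
    (hv : SolvesODEOn γ v v' I) {x y : ℝ} (hx : x ∈ I) (hy : y ∈ I) :
    u x * v' x - v x * u' x = u y * v' y - v y * u' y :=
  hI.apply_eq_of_hasDerivAt_zero hIc (fun _ hz => hu.hasDerivAt_wronskian hv hz) hx hy

/-- The coefficients of `u` in the basis `ψ₁, ψ₂` are the constant Wronskians
`W(u, ψ₂) / W(ψ₁, ψ₂)` and `-W(u, ψ₁) / W(ψ₁, ψ₂)`. -/
theorem exists_eq_add {ψ₁ ψ₁' ψ₂ ψ₂' : ℝ → ℝ} (hu : SolvesODEOn γ u u' I) (hI : IsOpen I)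
    (hIc : IsPreconnected I) (hψ₁ : SolvesODEOn γ ψ₁ ψ₁' I) (hψ₂ : SolvesODEOn γ ψ₂ ψ₂' I)
    {x₀ : ℝ} (hx₀ : x₀ ∈ I) (hψ : ψ₁ x₀ * ψ₂' x₀ - ψ₂ x₀ * ψ₁' x₀ ≠ 0) :
    ∃ a b : ℝ, ∀ x ∈ I, u x = a * ψ₁ x + b * ψ₂ x ∧ u' x = a * ψ₁' x + b * ψ₂' x := by
  refine ⟨(u x₀ * ψ₂' x₀ - ψ₂ x₀ * u' x₀) / (ψ₁ x₀ * ψ₂' x₀ - ψ₂ x₀ * ψ₁' x₀),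
    -(u x₀ * ψ₁' x₀ - ψ₁ x₀ * u' x₀) / (ψ₁ x₀ * ψ₂' x₀ - ψ₂ x₀ * ψ₁' x₀), fun x hx => ?_⟩
  rw [← hψ₁.wronskian_eq hI hIc hψ₂ hx hx₀] at hψ ⊢
  rw [← hu.wronskian_eq hI hIc hψ₂ hx hx₀, ← hu.wronskian_eq hI hIc hψ₁ hx hx₀]
  constructor <;> rw [div_mul_eq_mul_div, div_mul_eq_mul_div, ← add_div, eq_div_iff hψ] <;>
    ring

theorem exists_eq_add_of_wronskian_ne_zero {ψ₁ ψ₁' ψ₂ ψ₂' : ℝ → ℝ} (hI : IsOpen I)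
    (hIc : IsPreconnected I) (hψ₁ : SolvesODEOn γ ψ₁ ψ₁' I) (hψ₂ : SolvesODEOn γ ψ₂ ψ₂' I)
    {x₀ : ℝ} (hx₀ : x₀ ∈ I) (hψ : ψ₁ x₀ * ψ₂' x₀ - ψ₂ x₀ * ψ₁' x₀ ≠ 0)
    (hu : SolvesODEOn γ u u' I) (hv : SolvesODEOn γ v v' I)
    (huv : u x₀ * v' x₀ - v x₀ * u' x₀ ≠ 0) :
    ∃ a b c d : ℝ, a * d ≠ b * c ∧
      ∀ x ∈ I, u x = a * ψ₁ x + b * ψ₂ x ∧ v x = c * ψ₁ x + d * ψ₂ x := by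
  obtain ⟨a, b, hab⟩ := hu.exists_eq_add hI hIc hψ₁ hψ₂ hx₀ hψ
  obtain ⟨c, d, hcd⟩ := hv.exists_eq_add hI hIc hψ₁ hψ₂ hx₀ hψ
  refine ⟨a, b, c, d, fun hdet => huv ?_, fun x hx => ⟨(hab x hx).1, (hcd x hx).1⟩⟩
  rw [(hab x₀ hx₀).1, (hab x₀ hx₀).2, (hcd x₀ hx₀).1, (hcd x₀ hx₀).2]
  linear_combination (ψ₁ x₀ * ψ₂' x₀ - ψ₂ x₀ * ψ₁' x₀) * hdet

end SolvesODEOn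

section FundamentalSolutions

open Real

variable {γ s : ℝ} {I : Set ℝ}

theorem solvesODEOn_sin (hs : s ^ 2 = -γ) :
    SolvesODEOn γ (fun x => sin (s * x)) (fun x => s * cos (s * x)) I := fun x _ =>
  ⟨(((hasDerivAt_id' x).const_mul s).sin).congr_deriv (by ring),
    ((((hasDerivAt_id' x).const_mul s).cos).const_mul s).congr_deriv
      (by linear_combination -sin (s * x) * hs)⟩

theorem solvesODEOn_cos (hs : s ^ 2 = -γ) :
    SolvesODEOn γ (fun x => cos (s * x)) (fun x => -(s * sin (s * x))) I := fun x _ =>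
  ⟨(((hasDerivAt_id' x).const_mul s).cos).congr_deriv (by ring),
    ((((hasDerivAt_id' x).const_mul s).sin).const_mul s).neg.congr_deriv
      (by linear_combination -cos (s * x) * hs)⟩

theorem solvesODEOn_sinh (hs : s ^ 2 = γ) :
    SolvesODEOn γ (fun x => sinh (s * x)) (fun x => s * cosh (s * x)) I := fun x _ =>
  ⟨(((hasDerivAt_id' x).const_mul s).sinh).congr_deriv (by ring),
    ((((hasDerivAt_id' x).const_mul s).cosh).const_mul s).congr_deriv
      (by linear_combination sinh (s * x) * hs)⟩

theorem solvesODEOn_cosh (hs : s ^ 2 = γ) :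
    SolvesODEOn γ (fun x => cosh (s * x)) (fun x => s * sinh (s * x)) I := fun x _ =>
  ⟨(((hasDerivAt_id' x).const_mul s).cosh).congr_deriv (by ring),
    ((((hasDerivAt_id' x).const_mul s).sinh).const_mul s).congr_deriv
      (by linear_combination cosh (s * x) * hs)⟩

theorem solvesODEOn_id : SolvesODEOn 0 (fun x => x) (fun _ => 1) I := fun x _ =>
  ⟨hasDerivAt_id' x, (hasDerivAt_const x 1).congr_deriv (by ring)⟩

theorem solvesODEOn_one : SolvesODEOn 0 (fun _ => 1) (fun _ => 0) I := fun x _ =>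
  ⟨hasDerivAt_const x 1, (hasDerivAt_const x 0).congr_deriv (by ring)⟩

end FundamentalSolutions

namespace SolvesODEOn

open Real

variable {γ : ℝ} {I : Set ℝ} {u u' v v' : ℝ → ℝ}

theorem exists_eq_sin_cos (hu : SolvesODEOn γ u u' I) (hγ : γ < 0) (hI : IsOpen I)
    (hIc : IsPreconnected I) (hv : SolvesODEOn γ v v' I) {x₀ : ℝ} (hx₀ : x₀ ∈ I)
    (huv : u x₀ * v' x₀ - v x₀ * u' x₀ ≠ 0) :
    ∃ a b c d : ℝ, a * d ≠ b * c ∧ ∀ x ∈ I,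
      u x = a * sin (√(-γ) * x) + b * cos (√(-γ) * x) ∧
      v x = c * sin (√(-γ) * x) + d * cos (√(-γ) * x) := by
  set s := √(-γ)
  have hs : s ^ 2 = -γ := sq_sqrt (by linarith)
  have hW : sin (s * x₀) * -(s * sin (s * x₀)) - cos (s * x₀) * (s * cos (s * x₀)) = -s := by
    linear_combination -s * sin_sq_add_cos_sq (s * x₀)
  refine exists_eq_add_of_wronskian_ne_zero hI hIc (solvesODEOn_sin hs) (solvesODEOn_cos hs)
    hx₀ ?_ hu hv huv
  rw [hW]
  exact neg_ne_zero.2 (sqrt_pos.2 (by linarith)).ne'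

theorem exists_eq_sinh_cosh (hu : SolvesODEOn γ u u' I) (hγ : 0 < γ) (hI : IsOpen I)
    (hIc : IsPreconnected I) (hv : SolvesODEOn γ v v' I) {x₀ : ℝ} (hx₀ : x₀ ∈ I)
    (huv : u x₀ * v' x₀ - v x₀ * u' x₀ ≠ 0) :
    ∃ a b c d : ℝ, a * d ≠ b * c ∧ ∀ x ∈ I,
      u x = a * sinh (√γ * x) + b * cosh (√γ * x) ∧
      v x = c * sinh (√γ * x) + d * cosh (√γ * x) := by
  set s := √γ
  have hs : s ^ 2 = γ := sq_sqrt hγ.le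
  have hW : sinh (s * x₀) * (s * sinh (s * x₀)) - cosh (s * x₀) * (s * cosh (s * x₀)) = -s := by
    linear_combination -s * cosh_sq_sub_sinh_sq (s * x₀)
  refine exists_eq_add_of_wronskian_ne_zero hI hIc (solvesODEOn_sinh hs) (solvesODEOn_cosh hs)
    hx₀ ?_ hu hv huv
  rw [hW]
  exact neg_ne_zero.2 (sqrt_pos.2 hγ).ne'

theorem exists_eq_linear (hu : SolvesODEOn 0 u u' I) (hI : IsOpen I) (hIc : IsPreconnected I)
    (hv : SolvesODEOn 0 v v' I) {x₀ : ℝ} (hx₀ : x₀ ∈ I)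
    (huv : u x₀ * v' x₀ - v x₀ * u' x₀ ≠ 0) :
    ∃ a b c d : ℝ, a * d ≠ b * c ∧ ∀ x ∈ I, u x = a * x + b ∧ v x = c * x + d := by
  simpa using exists_eq_add_of_wronskian_ne_zero hI hIc solvesODEOn_id solvesODEOn_one hx₀
    (by norm_num) hu hv huv

end SolvesODEOn

theorem stmt13_general (I : Set ℝ) (hIopen : IsOpen I) (hIconn : I.OrdConnected)
    (f g : ℝ → ℝ)
    (hf : ∀ k < 4, ∀ x ∈ I, DifferentiableAt ℝ (iteratedDeriv k f) x)
    (hg : ∀ k < 4, ∀ x ∈ I, DifferentiableAt ℝ (iteratedDeriv k g) x)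
    (hW : ∃ x ∈ I, Wfg f g 0 1 x ≠ 0)
    (hD : ∀ x ∈ I, ∀ y ∈ I, Dfg f g x y = 0) :
    ∃ a b c d γ : ℝ, a * d ≠ b * c ∧
      ((γ < 0 ∧ ∀ x ∈ I,
          f x = a * Real.sin (Real.sqrt (-γ) * x) + b * Real.cos (Real.sqrt (-γ) * x) ∧
          g x = c * Real.sin (Real.sqrt (-γ) * x) + d * Real.cos (Real.sqrt (-γ) * x)) ∨
        (γ = 0 ∧ ∀ x ∈ I, f x = a * x + b ∧ g x = c * x + d) ∨
        (0 < γ ∧ ∀ x ∈ I,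
          f x = a * Real.sinh (Real.sqrt γ * x) + b * Real.cosh (Real.sqrt γ * x) ∧
          g x = c * Real.sinh (Real.sqrt γ * x) + d * Real.cosh (Real.sqrt γ * x))) := by
  obtain ⟨x₀, hx₀, hW₀⟩ := hW
  have hIc := hIconn.isPreconnected
  obtain ⟨γ, hγ⟩ := exists_iteratedDeriv_two_eq_mul hIopen hIc hf hg hD hx₀ hW₀
  have hF := solvesODEOn_of_iteratedDeriv_two_eq (fun k hk => hf k (by omega)) fun x hx =>
    (hγ x hx).1
  have hG := solvesODEOn_of_iteratedDeriv_two_eq (fun k hk => hg k (by omega)) fun x hx =>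
    (hγ x hx).2
  have hFG : f x₀ * iteratedDeriv 1 g x₀ - g x₀ * iteratedDeriv 1 f x₀ ≠ 0 := by
    simpa [Wfg] using hW₀
  rcases lt_trichotomy γ 0 with hneg | rfl | hpos
  · obtain ⟨a, b, c, d, hdet, h⟩ := hF.exists_eq_sin_cos hneg hIopen hIc hG hx₀ hFG
    exact ⟨a, b, c, d, γ, hdet, Or.inl ⟨hneg, h⟩⟩
  · obtain ⟨a, b, c, d, hdet, h⟩ := hF.exists_eq_linear hIopen hIc hG hx₀ hFG
    exact ⟨a, b, c, d, 0, hdet, Or.inr (Or.inl ⟨rfl, h⟩)⟩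
  · obtain ⟨a, b, c, d, hdet, h⟩ := hF.exists_eq_sinh_cosh hpos hIopen hIc hG hx₀ hFG
    exact ⟨a, b, c, d, γ, hdet, Or.inr (Or.inr ⟨hpos, h⟩)⟩

/-- Let `f, g : I → ℝ` be `4` times differentiable functions such that
`W^{0,1}_{f,g}` is not identically zero on `I`, and suppose `D_{f,g}(x,y) = 0` for all
`x, y ∈ I`.  Then there exist constants `a, b, c, d, γ ∈ ℝ` with `ad ≠ bc` such that
`f = a·ψ₁ + b·ψ₂` and `g = c·ψ₁ + d·ψ₂` on `I`, where: if `γ < 0` then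
`ψ₁(x) = sin(√(−γ)x)`, `ψ₂(x) = cos(√(−γ)x)`; if `γ = 0` then `ψ₁(x) = x`, `ψ₂(x) = 1`;
and if `γ > 0` then `ψ₁(x) = sinh(√γ x)`, `ψ₂(x) = cosh(√γ x)`. -/
theorem stmt13 (I : Set ℝ) (hIopen : IsOpen I) (hIconn : I.OrdConnected)
    (hIne : I.Nonempty) (f g : ℝ → ℝ)
    (hf : ∀ k < 4, ∀ x ∈ I, DifferentiableAt ℝ (iteratedDeriv k f) x)
    (hg : ∀ k < 4, ∀ x ∈ I, DifferentiableAt ℝ (iteratedDeriv k g) x)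
    (hW : ∃ x ∈ I, Wfg f g 0 1 x ≠ 0)
    (hD : ∀ x ∈ I, ∀ y ∈ I, Dfg f g x y = 0) :
    ∃ a b c d γ : ℝ, a * d ≠ b * c ∧
      ((γ < 0 ∧ ∀ x ∈ I,
          f x = a * Real.sin (Real.sqrt (-γ) * x) + b * Real.cos (Real.sqrt (-γ) * x) ∧
          g x = c * Real.sin (Real.sqrt (-γ) * x) + d * Real.cos (Real.sqrt (-γ) * x)) ∨
        (γ = 0 ∧ ∀ x ∈ I, f x = a * x + b ∧ g x = c * x + d) ∨
        (0 < γ ∧ ∀ x ∈ I,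
          f x = a * Real.sinh (Real.sqrt γ * x) + b * Real.cosh (Real.sqrt γ * x) ∧
          g x = c * Real.sinh (Real.sqrt γ * x) + d * Real.cosh (Real.sqrt γ * x))) :=
  stmt13_general I hIopen hIconn f g hf hg hW hD
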